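/- Let h > r ≥ 1 be integers, K = C(h,r), K̂ = C(h−1,r−1), D ≥ K the number of files, t ∈ {0,1,…,K̂}, and let b be a positive integer with 2^(C(K̂,t)·b) ≥ h; set F = r·C(K̂,t)·b. Then, for every such combination network (no divisibility of h by r, i.e. no resolvability, is required), there exists a caching scheme with no relay caches: user-cache placement functions mapping the D files (each an F-bit string) to user caches of D·r·C(K̂−1,t−1)·b bits each; for every demand vector d, server-to-relay signals of C(K̂,t+1)·b bits and relay-to-user signals of C(K̂−1,t)·b bits (the latter computed only from the relay's received signal and d); and decoding functions so that every user reconstructs its requested file exactly from its cache, d, and the signals received from its r relays, for every file realization and every demand vector. (These bit counts correspond to user memory M·F with M = t·D/K̂, first-hop rate R1 = (K̂/r)·(1 − M/D)/(1 + K̂·M/D), and second-hop rate R2 = (1/r)(1 − M/D).) -/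

import Mathlib

/-!
Write each file as `r` symbols of `GF(2^L)`, `L = C(K̂, t) * b`, and encode it with a
Reed–Solomon code of length `h` (possible since `h ≤ 2^L`): relay `j` carries the `j`-th
codeword symbol of every file. Among the `K̂` users attached to relay `j` run the
Maddah-Ali–Niesen scheme on these symbols: a symbol is cut into `C(K̂, t)` subfiles of `b` bits
indexed by `t`-sets of those users, each user caches the subfiles whose index contains it, the
server sends relay `j` the sum of `W (d u) (S \ {u})` over `u ∈ S` for every `(t + 1)`-set `S`,
and the relay forwards to each user the sums whose `S` contains it. A user thereby learns the
symbols of its file at all of its `r` relays, and `r` values of a polynomial of degree `< r`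
determine it by Lagrange interpolation.
-/

open Finset Polynomial

-- The `Fintype` instances of the cache types, functions on subtypes of finsets of subtypes,
-- exceed the default size bound of instance search.
set_option synthInstance.maxSize 256

section ContainingSubsets

variable {α : Type*} [Fintype α] [DecidableEq α]

def Finset.subtypeCardSuccMemEquiv (a : α) (k : ℕ) :
    {s : Finset α // s.card = k + 1 ∧ a ∈ s} ≃
      {s : Finset α // s ∈ (univ.erase a).powersetCard k} where
  toFun s := ⟨s.1.erase a, mem_powersetCard.2
    ⟨erase_subset_erase a (subset_univ _), by rw [card_erase_of_mem s.2.2, s.2.1]; rfl⟩⟩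
  invFun s := ⟨insert a s.1, by
    obtain ⟨hsub, hcard⟩ := mem_powersetCard.1 s.2
    rw [card_insert_of_notMem fun ha => (mem_erase.1 (hsub ha)).1 rfl, hcard]
    exact ⟨rfl, mem_insert_self a _⟩⟩
  left_inv s := Subtype.ext (insert_erase s.2.2)
  right_inv s := Subtype.ext <| erase_insert fun ha =>
    (mem_erase.1 ((mem_powersetCard.1 s.2).1 ha)).1 rfl

theorem Fintype.card_subtype_card_eq_succ_and_mem (a : α) (k : ℕ) :
    Fintype.card {s : Finset α // s.card = k + 1 ∧ a ∈ s} =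
      (Fintype.card α - 1).choose k := by
  rw [Fintype.card_congr (subtypeCardSuccMemEquiv a k), Fintype.card_coe, card_powersetCard,
    card_erase_of_mem (mem_univ a), card_univ]

theorem Fintype.card_subtype_card_eq_and_mem_le (a : α) (k : ℕ) :
    Fintype.card {s : Finset α // s.card = k ∧ a ∈ s} ≤
      (Fintype.card α - 1).choose (k - 1) := by
  cases k with
  | zero =>
    have : IsEmpty {s : Finset α // s.card = 0 ∧ a ∈ s} :=
      ⟨fun s => notMem_empty a (Finset.card_eq_zero.1 s.2.1 ▸ s.2.2)⟩
    rw [Fintype.card_eq_zero]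
    exact Nat.zero_le _
  | succ k => exact (card_subtype_card_eq_succ_and_mem a k).le

end ContainingSubsets

section ReedSolomon

variable {ι K : Type*} [DecidableEq ι] [Field K] {r : ℕ}

noncomputable def Polynomial.ofFinCoeff (a : Fin r → K) : K[X] := (degreeLTEquiv K r).symm a

theorem Lagrange.coeff_interpolate_of_eval_ofFinCoeff_eq {s : Finset ι} {x v : ι → K}
    (a : Fin r → K) (hs : s.card = r) (hx : Set.InjOn x s)
    (hv : ∀ i ∈ s, (Polynomial.ofFinCoeff a).eval (x i) = v i) :
    (fun k : Fin r => (Lagrange.interpolate s x v).coeff k) = a := by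
  have hdeg : (Polynomial.ofFinCoeff a).degree < s.card := by
    rw [hs]
    exact mem_degreeLT.1 ((degreeLTEquiv K r).symm a).2
  rw [← Lagrange.eq_interpolate_of_eval_eq v hx hdeg hv]
  exact (degreeLTEquiv K r).apply_symm_apply a

end ReedSolomon

namespace BitString

variable {α : Type*} [Fintype α] {n : ℕ}

noncomputable def encode (hα : Fintype.card α ≤ 2 ^ n) : α ↪ (Fin n → Bool) :=
  (Function.Embedding.nonempty_of_card_le (by simpa using hα)).some

noncomputable def decode [Nonempty α] (hα : Fintype.card α ≤ 2 ^ n) :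
    (Fin n → Bool) → α :=
  Function.invFun (encode hα)

theorem decode_encode [Nonempty α] (hα : Fintype.card α ≤ 2 ^ n) (a : α) :
    decode hα (encode hα a) = a :=
  Function.leftInverse_invFun (encode hα).injective a

end BitString

namespace CodedCaching

variable {ι N G : Type*} [DecidableEq ι] [AddCommGroup G] {t : ℕ}

abbrev Cache (ι N G : Type*) (t : ℕ) (u : ι) :=
  N → {T : Finset ι // T.card = t ∧ u ∈ T} → G

abbrev Delivery (ι G : Type*) (t : ℕ) := {S : Finset ι // S.card = t + 1} → G

abbrev Forwarded (ι G : Type*) (t : ℕ) (u : ι) :=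
  {S : Finset ι // S.card = t + 1 ∧ u ∈ S} → G

def cache (t : ℕ) (W : N → Finset ι → G) (u : ι) : Cache ι N G t u := fun n T => W n T

def delivery (t : ℕ) (W : N → Finset ι → G) (d : ι → N) : Delivery ι G t :=
  fun S => ∑ v ∈ S.1, W (d v) (S.1.erase v)

def forward (u : ι) (x : Delivery ι G t) : Forwarded ι G t u := fun S => x ⟨S.1, S.2.1⟩

noncomputable def decode (u : ι) (Z : Cache ι N G t u) (d : ι → N) (y : Forwarded ι G t u)
    (T : Finset ι) : G :=
  if u ∈ T then Function.extend Subtype.val (Z (d u)) 0 T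
  else Function.extend Subtype.val y 0 (insert u T) -
    ∑ v ∈ T, Function.extend Subtype.val (Z (d v)) 0 ((insert u T).erase v)

/-- The delivery for `insert u T` is `W (d u) T` plus subfiles that `u` has cached. -/
theorem decode_cache_forward_delivery (W : N → Finset ι → G) (d : ι → N) (u : ι)
    {T : Finset ι} (hT : T.card = t) :
    decode u (cache t W u) d (forward u (delivery t W d)) T = W (d u) T := by
  unfold decode
  split_ifs with hu
  · exact Subtype.val_injective.extend_apply (cache t W u (d u)) 0 ⟨T, hT, hu⟩
  · have hS : (insert u T).card = t + 1 := by rw [card_insert_of_notMem hu, hT]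
    have hZ : ∀ v ∈ T, Function.extend Subtype.val (cache t W u (d v)) 0 ((insert u T).erase v)
        = W (d v) ((insert u T).erase v) := by
      intro v hv
      have hvu : v ≠ u := fun h => hu (h ▸ hv)
      refine Subtype.val_injective.extend_apply (cache t W u (d v)) 0
        ⟨(insert u T).erase v, ?_, mem_erase.2 ⟨hvu.symm, mem_insert_self u T⟩⟩
      rw [card_erase_of_mem (mem_insert_of_mem hv), hS, Nat.add_sub_cancel]
    rw [Subtype.val_injective.extend_apply (forward u (delivery t W d)) 0
      ⟨insert u T, hS, mem_insert_self u T⟩, sum_congr rfl hZ]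
    simp only [forward, delivery]
    rw [sum_insert hu, erase_insert hu, add_sub_cancel_right]

end CodedCaching

namespace CombinationNetwork

abbrev User (h r : ℕ) := {U : Finset (Fin h) // U.card = r}

abbrev RelayUser (h r : ℕ) (j : Fin h) := {U : User h r // j ∈ U.1}

abbrev UserCache (h r t D : ℕ) (G : Type*) (U : User h r) :=
  (j : {j // j ∈ U.1}) → CodedCaching.Cache (RelayUser h r j) (Fin D) G t ⟨U, j.2⟩

section Scheme

variable {h r t D F : ℕ} {K G : Type*} [Field K] [AddCommGroup G]
  (pt : Fin h ↪ K) (msg : (Fin F → Bool) ≃ (Fin r → K))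
  (split : (j : Fin h) → K ≃ ({T : Finset (RelayUser h r j) // T.card = t} → G))

noncomputable def subfile (w : Fin D → Fin F → Bool) (j : Fin h) (n : Fin D) :
    Finset (RelayUser h r j) → G :=
  Function.extend Subtype.val (split j ((Polynomial.ofFinCoeff (msg (w n))).eval (pt j))) 0

noncomputable def userCache (w : Fin D → Fin F → Bool) (U : User h r) : UserCache h r t D G U :=
  fun j => CodedCaching.cache t (subfile pt msg split w j) ⟨U, j.2⟩

noncomputable def relaySignal (w : Fin D → Fin F → Bool) (d : User h r → Fin D) (j : Fin h) :
    CodedCaching.Delivery (RelayUser h r j) G t :=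
  CodedCaching.delivery t (subfile pt msg split w j) fun u => d u.1

noncomputable def decodeFile (U : User h r) (Z : UserCache h r t D G U) (d : User h r → Fin D)
    (y : (j : Fin h) → (hj : j ∈ U.1) →
      CodedCaching.Forwarded (RelayUser h r j) G t ⟨U, hj⟩) :
    Fin F → Bool :=
  msg.symm fun k => (Lagrange.interpolate U.1 pt fun j =>
    if hj : j ∈ U.1 then (split j).symm fun T =>
      CodedCaching.decode ⟨U, hj⟩ (Z ⟨j, hj⟩) (fun u => d u.1) (y j hj) T.1
    else 0).coeff k

theorem decodeFile_userCache (w : Fin D → Fin F → Bool) (d : User h r → Fin D)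
    (U : User h r) :
    decodeFile pt msg split U (userCache pt msg split w U) d
      (fun j hj => CodedCaching.forward ⟨U, hj⟩ (relaySignal pt msg split w d j)) =
        w (d U) := by
  rw [decodeFile, Lagrange.coeff_interpolate_of_eval_ofFinCoeff_eq (msg (w (d U))) U.2
    pt.injective.injOn, Equiv.symm_apply_apply]
  intro j hj
  rw [dif_pos hj, Equiv.eq_symm_apply]
  funext T
  rw [userCache, relaySignal, CodedCaching.decode_cache_forward_delivery _ _ _ T.2, subfile,
    Subtype.val_injective.extend_apply]

end Scheme

section Card

variable {h r : ℕ}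

theorem card_relayUser (hr : 1 ≤ r) (j : Fin h) :
    Fintype.card (RelayUser h r j) = (h - 1).choose (r - 1) := by
  obtain ⟨k, rfl⟩ := Nat.exists_eq_add_of_le' hr
  rw [Fintype.card_congr (Equiv.subtypeSubtypeEquivSubtypeInter _ fun U => j ∈ U),
    Fintype.card_subtype_card_eq_succ_and_mem, Fintype.card_fin, Nat.add_sub_cancel]

theorem card_packets (α : Type*) [Fintype α] [DecidableEq α] (b : ℕ) :
    Fintype.card (α → Fin b → ZMod 2) = 2 ^ (Fintype.card α * b) := by
  simp [ZMod.card, ← pow_mul, mul_comm]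

theorem card_delivery (hr : 1 ≤ r) (j : Fin h) (t b : ℕ) :
    Fintype.card (CodedCaching.Delivery (RelayUser h r j) (Fin b → ZMod 2) t) =
      2 ^ (((h - 1).choose (r - 1)).choose (t + 1) * b) := by
  rw [card_packets, Fintype.card_finset_len, card_relayUser hr]

theorem card_forwarded (hr : 1 ≤ r) (j : Fin h) (u : RelayUser h r j) (t b : ℕ) :
    Fintype.card (CodedCaching.Forwarded (RelayUser h r j) (Fin b → ZMod 2) t u) =
      2 ^ (((h - 1).choose (r - 1) - 1).choose t * b) := by
  rw [card_packets, Fintype.card_subtype_card_eq_succ_and_mem, card_relayUser hr]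

-- Only an upper bound: for `t = 0` no subset of size `t` contains the user, while the
-- truncated `t - 1 = 0` gives the binomial coefficient `1`.
theorem card_userCache_le (hr : 1 ≤ r) (U : User h r) (t D b : ℕ) :
    Fintype.card (UserCache h r t D (Fin b → ZMod 2) U) ≤
      2 ^ (D * r * (((h - 1).choose (r - 1) - 1).choose (t - 1) * b)) := by
  set c := ((h - 1).choose (r - 1) - 1).choose (t - 1)
  calc Fintype.card (UserCache h r t D (Fin b → ZMod 2) U)
      ≤ ∏ _j : {j // j ∈ U.1}, (2 ^ (c * b)) ^ D := by
        rw [Fintype.card_pi]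
        refine prod_le_prod' fun j _ => ?_
        rw [Fintype.card_fun, card_packets, Fintype.card_fin]
        refine Nat.pow_le_pow_left (Nat.pow_le_pow_right two_pos (Nat.mul_le_mul_right b ?_)) D
        simpa only [card_relayUser hr] using
          Fintype.card_subtype_card_eq_and_mem_le (⟨U, j.2⟩ : RelayUser h r j) t
    _ = 2 ^ (D * r * (c * b)) := by
        rw [prod_const, card_univ, Fintype.card_coe, U.2, ← pow_mul, ← pow_mul]
        ring_nf

end Card

section BitScheme

variable {h r t b D F : ℕ} {K : Type*} [Field K] (hr : 1 ≤ r)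
  (pt : Fin h ↪ K) (msg : (Fin F → Bool) ≃ (Fin r → K))
  (split : (j : Fin h) →
    K ≃ ({T : Finset (RelayUser h r j) // T.card = t} → Fin b → ZMod 2))

noncomputable def placeBits (U : User h r) (w : Fin D → Fin F → Bool) :
    Fin (D * r * (((h - 1).choose (r - 1) - 1).choose (t - 1) * b)) → Bool :=
  BitString.encode (card_userCache_le hr U t D b) (userCache pt msg split w U)

noncomputable def serverBits (j : Fin h) (w : Fin D → Fin F → Bool) (d : User h r → Fin D) :
    Fin (((h - 1).choose (r - 1)).choose (t + 1) * b) → Bool :=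
  BitString.encode (card_delivery hr j t b).le (relaySignal pt msg split w d j)

noncomputable def relayBits (t b : ℕ) (j : Fin h) (U : User h r)
    (x : Fin (((h - 1).choose (r - 1)).choose (t + 1) * b) → Bool) :
    Fin (((h - 1).choose (r - 1) - 1).choose t * b) → Bool :=
  if hj : j ∈ U.1 then
    BitString.encode (card_forwarded hr j ⟨U, hj⟩ t b).le
      (CodedCaching.forward ⟨U, hj⟩ (BitString.decode (card_delivery hr j t b).le x))
  else fun _ => false

noncomputable def decodeBits (U : User h r)
    (c : Fin (D * r * (((h - 1).choose (r - 1) - 1).choose (t - 1) * b)) → Bool)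
    (d : User h r → Fin D)
    (y : (j : Fin h) → j ∈ U.1 → Fin (((h - 1).choose (r - 1) - 1).choose t * b) → Bool) :
    Fin F → Bool :=
  decodeFile pt msg split U (BitString.decode (card_userCache_le hr U t D b) c) d
    fun j hj => BitString.decode (card_forwarded hr j ⟨U, hj⟩ t b).le (y j hj)

theorem decodeBits_placeBits (w : Fin D → Fin F → Bool) (d : User h r → Fin D)
    (U : User h r) :
    decodeBits hr pt msg split U (placeBits hr pt msg split U w) d
      (fun j _ => relayBits hr t b j U (serverBits hr pt msg split j w d)) = w (d U) := by
  have hrelay : ∀ j (hj : j ∈ U.1),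
      BitString.decode (card_forwarded hr j ⟨U, hj⟩ t b).le
        (relayBits hr t b j U (serverBits hr pt msg split j w d)) =
      CodedCaching.forward ⟨U, hj⟩ (relaySignal pt msg split w d j) := by
    intro j hj
    rw [relayBits, dif_pos hj, serverBits, BitString.decode_encode, BitString.decode_encode]
  simp only [decodeBits, placeBits, BitString.decode_encode, hrelay]
  exact decodeFile_userCache pt msg split w d U

end BitScheme

end CombinationNetwork

theorem stmt_1_general (h r : ℕ) (hr : 1 ≤ r)
    (Khat : ℕ) (hKhat : Khat = Nat.choose (h - 1) (r - 1))
    (D : ℕ)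
    (t : ℕ) (ht : t ≤ Khat)
    (b : ℕ) (hb : 0 < b)
    (hMDS : h ≤ 2 ^ (Nat.choose Khat t * b))
    (F : ℕ) (hF : F = r * (Nat.choose Khat t * b)) :
    ∃ (userPlace : {U : Finset (Fin h) // U.card = r} →
        (Fin D → (Fin F → Bool)) →
        (Fin (D * r * (Nat.choose (Khat - 1) (t - 1) * b)) → Bool))
      (X : Fin h → (Fin D → (Fin F → Bool)) →
        ({U : Finset (Fin h) // U.card = r} → Fin D) →
        (Fin (Nat.choose Khat (t + 1) * b) → Bool))
      (Y : Fin h → {U : Finset (Fin h) // U.card = r} →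
        (Fin (Nat.choose Khat (t + 1) * b) → Bool) →
        ({U : Finset (Fin h) // U.card = r} → Fin D) →
        (Fin (Nat.choose (Khat - 1) t * b) → Bool))
      (dec : (U : {U : Finset (Fin h) // U.card = r}) →
        (Fin (D * r * (Nat.choose (Khat - 1) (t - 1) * b)) → Bool) →
        ({U : Finset (Fin h) // U.card = r} → Fin D) →
        ((j : Fin h) → j ∈ U.1 → (Fin (Nat.choose (Khat - 1) t * b) → Bool)) →
        (Fin F → Bool)),
      ∀ (w : Fin D → (Fin F → Bool)) (d : {U : Finset (Fin h) // U.card = r} → Fin D)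
        (U : {U : Finset (Fin h) // U.card = r}),
        dec U (userPlace U w) d
          (fun j _ => Y j U (X j w d) d) = w (d U) := by
  subst hKhat hF
  set L := ((h - 1).choose (r - 1)).choose t * b
  let := Fintype.ofFinite (GaloisField 2 L)
  have hcard : Fintype.card (GaloisField 2 L) = 2 ^ L := by
    rw [← Nat.card_eq_fintype_card,
      GaloisField.card 2 L (Nat.mul_ne_zero (Nat.choose_pos ht).ne' hb.ne')]
  have pt : Fin h ↪ GaloisField 2 L :=
    (Function.Embedding.nonempty_of_card_le (by rwa [Fintype.card_fin, hcard])).some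
  have msg : (Fin (r * L) → Bool) ≃ (Fin r → GaloisField 2 L) :=
    Fintype.equivOfCardEq (by simp [hcard, ← pow_mul, mul_comm])
  open CombinationNetwork in
  have split (j : Fin h) :
      GaloisField 2 L ≃ ({T : Finset (RelayUser h r j) // T.card = t} → Fin b → ZMod 2) :=
    Fintype.equivOfCardEq (by rw [hcard, card_packets, Fintype.card_finset_len, card_relayUser hr])
  open CombinationNetwork in
  exact ⟨placeBits hr pt msg split, serverBits hr pt msg split,
    fun j U x _ => relayBits hr t b j U x, decodeBits hr pt msg split,
    decodeBits_placeBits hr pt msg split⟩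

/-- Corollary 1 of the paper: existence of a centralized coded caching scheme for any
combination network without relay caches (no resolvability assumption), achieving the
Tang–Ramamoorthy rates. The relay-to-user signal is computed only from the relay's
received signal and the demand vector. -/
theorem stmt_1 (h r : ℕ) (hr : 1 ≤ r) (hrh : r < h)
    (Khat : ℕ) (hKhat : Khat = Nat.choose (h - 1) (r - 1))
    (D : ℕ) (hD : Nat.choose h r ≤ D)
    (t : ℕ) (ht : t ≤ Khat)
    (b : ℕ) (hb : 0 < b)
    (hMDS : h ≤ 2 ^ (Nat.choose Khat t * b))
    (F : ℕ) (hF : F = r * (Nat.choose Khat t * b)) :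
    ∃ (userPlace : {U : Finset (Fin h) // U.card = r} →
        (Fin D → (Fin F → Bool)) →
        (Fin (D * r * (Nat.choose (Khat - 1) (t - 1) * b)) → Bool))
      (X : Fin h → (Fin D → (Fin F → Bool)) →
        ({U : Finset (Fin h) // U.card = r} → Fin D) →
        (Fin (Nat.choose Khat (t + 1) * b) → Bool))
      (Y : Fin h → {U : Finset (Fin h) // U.card = r} →
        (Fin (Nat.choose Khat (t + 1) * b) → Bool) →
        ({U : Finset (Fin h) // U.card = r} → Fin D) →
        (Fin (Nat.choose (Khat - 1) t * b) → Bool))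
      (dec : (U : {U : Finset (Fin h) // U.card = r}) →
        (Fin (D * r * (Nat.choose (Khat - 1) (t - 1) * b)) → Bool) →
        ({U : Finset (Fin h) // U.card = r} → Fin D) →
        ((j : Fin h) → j ∈ U.1 → (Fin (Nat.choose (Khat - 1) t * b) → Bool)) →
        (Fin F → Bool)),
      ∀ (w : Fin D → (Fin F → Bool)) (d : {U : Finset (Fin h) // U.card = r} → Fin D)
        (U : {U : Finset (Fin h) // U.card = r}),
        dec U (userPlace U w) d
          (fun j _ => Y j U (X j w d) d) = w (d U) :=
  stmt_1_general h r hr Khat hKhat D t ht b hb hMDS F hF
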